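/- arXiv:1610.01384 — 2 statements merged into one kernel-verified Lean document; each statement's English description precedes it below -/
import Mathlib

section
/- Let n ≥ 1, a : Fin n → ℝ and b ∈ ℝ with a i > 0 for all i and b > 0, and let λ ∈ ℝ satisfy -b < λ < a i for all i. Let f_λ be the diagonal linear map on ℝ^{n+1} multiplying x_i by Real.sqrt ((a i - λ)/(a i)) (i ≥ 1) and x₀ by Real.sqrt ((b + λ)/b), and let g_λ = f_λ⁻¹ be its inverse (diagonal with the reciprocal entries). Suppose x, y ∈ ℝ^{n+1} satisfy ‖x‖ = 1, ‖y‖ = 1, q(x) = ∑_{i=1}^n (x i)^2/a i - (x 0)^2/b = 0 and q_λ(y) = ∑_{i=1}^n (y i)^2/(a i - λ) - (y 0)^2/(b + λ) = 0. Then ‖f_λ x‖ = 1, ‖g_λ y‖ = 1, and Real.arccos ⟪x, y⟫ = Real.arccos ⟪f_λ x, g_λ y⟫. (Spherical Ivory Lemma: the spherical distance between x and y equals the spherical distance between the corresponding points f_λ x and f_λ⁻¹ y on the two confocal spherical ellipsoids.) -/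
/-!
Both maps are coordinatewise scalings, by factors inverse to each other, so `⟪f x, g y⟫ = ⟪x, y⟫`
and the arccos of the two inner products agree. What remains is that `f` and `g` map unit vectors of
the respective spherical ellipsoids to unit vectors. Writing `Q_λ` for the quadratic form of the
confocal quadric, scaling the coordinates of `x` by `√((a_i - μ)/(a_i - λ))` and `√((b + μ)/(b + λ))`
changes the squared norm by `‖x‖² ↦ ‖x‖² - (μ - λ) Q_λ(x)`; on `Q_λ(x) = 0` the norm is unchanged.
-/

open RealInnerProductSpace

namespace EuclideanSpace

variable {ι : Type*} [Fintype ι]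

theorem inner_eq_of_apply_eq_mul_of_apply_eq_inv_mul {d : ι → ℝ} (hd : ∀ i, d i ≠ 0)
    {u v x y : EuclideanSpace ℝ ι} (hu : ∀ i, u i = d i * x i) (hv : ∀ i, v i = (d i)⁻¹ * y i) :
    ⟪u, v⟫ = ⟪x, y⟫ := by
  simp only [PiLp.inner_apply, RCLike.inner_apply, conj_trivial, hu, hv]
  refine Finset.sum_congr rfl fun i _ => ?_
  field_simp [hd i]

theorem norm_sq_eq_sum_mul_sq_of_apply_eq_sqrt_mul {c : ι → ℝ} (hc : ∀ i, 0 ≤ c i)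
    {u x : EuclideanSpace ℝ ι} (hu : ∀ i, u i = √(c i) * x i) :
    ‖u‖ ^ 2 = ∑ i, c i * x i ^ 2 := by
  simp only [real_norm_sq_eq, hu, mul_pow, Real.sq_sqrt (hc _)]

end EuclideanSpace

noncomputable section Confocal

variable {n : ℕ} (a : Fin n → ℝ) (b : ℝ)

/-- The quadratic form `q_λ` of the confocal family; `q = q_0`. -/
def confocalQuadric (lam : ℝ) (x : EuclideanSpace ℝ (Fin (n + 1))) : ℝ :=
  ∑ i : Fin n, x i.succ ^ 2 / (a i - lam) - x 0 ^ 2 / (b + lam)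

/-- The squared scaling factors taking the quadric `q_λ = 0` to `q_μ = 0`. -/
def confocalRatio (μ lam : ℝ) : Fin (n + 1) → ℝ :=
  Fin.cons ((b + μ) / (b + lam)) fun i => (a i - μ) / (a i - lam)

variable {a b}

theorem confocalRatio_inv (μ lam : ℝ) (i : Fin (n + 1)) :
    (confocalRatio a b μ lam i)⁻¹ = confocalRatio a b lam μ i := by
  cases i using Fin.cases <;> simp [confocalRatio, inv_div]

theorem confocalRatio_nonneg {μ lam : ℝ} (hbμ : 0 ≤ b + μ) (hbl : 0 ≤ b + lam)
    (haμ : ∀ i, 0 ≤ a i - μ) (hal : ∀ i, 0 ≤ a i - lam) (i : Fin (n + 1)) :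
    0 ≤ confocalRatio a b μ lam i := by
  cases i using Fin.cases with
  | zero => exact div_nonneg hbμ hbl
  | succ i => exact div_nonneg (haμ i) (hal i)

theorem sum_confocalRatio_mul_sq {lam : ℝ} (hbl : b + lam ≠ 0) (hal : ∀ i, a i - lam ≠ 0)
    (μ : ℝ) (x : EuclideanSpace ℝ (Fin (n + 1))) :
    ∑ i, confocalRatio a b μ lam i * x i ^ 2 = ‖x‖ ^ 2 - (μ - lam) * confocalQuadric a b lam x := by
  have hterm : ∀ i, (a i - μ) / (a i - lam) * x i.succ ^ 2
      = x i.succ ^ 2 - (μ - lam) * (x i.succ ^ 2 / (a i - lam)) := fun i => by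
    field_simp [hal i]
    ring
  rw [EuclideanSpace.real_norm_sq_eq, Fin.sum_univ_succ, Fin.sum_univ_succ, confocalQuadric]
  simp only [confocalRatio, Fin.cons_zero, Fin.cons_succ, hterm, Finset.sum_sub_distrib,
    ← Finset.mul_sum]
  field_simp
  ring

theorem norm_eq_one_of_confocalQuadric_eq_zero {μ lam : ℝ} (hbμ : 0 ≤ b + μ) (hbl : 0 < b + lam)
    (haμ : ∀ i, 0 ≤ a i - μ) (hal : ∀ i, 0 < a i - lam) {u x : EuclideanSpace ℝ (Fin (n + 1))}
    (hu : ∀ i, u i = √(confocalRatio a b μ lam i) * x i) (hx : ‖x‖ = 1)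
    (hq : confocalQuadric a b lam x = 0) : ‖u‖ = 1 := by
  have hc := confocalRatio_nonneg hbμ hbl.le haμ fun i => (hal i).le
  have hu2 : ‖u‖ ^ 2 = 1 := by
    rw [EuclideanSpace.norm_sq_eq_sum_mul_sq_of_apply_eq_sqrt_mul hc hu,
      sum_confocalRatio_mul_sq hbl.ne' (fun i => (hal i).ne'), hx, hq]
    ring
  exact (pow_eq_one_iff_of_nonneg (norm_nonneg u) two_ne_zero).1 hu2

end Confocal

theorem ivory_lemma_sphere_general (n : ℕ) (a : Fin n → ℝ) (b : ℝ)
    (ha : ∀ i, 0 < a i) (hb : 0 < b)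
    (lam : ℝ) (hlam₁ : -b < lam) (hlam₂ : ∀ i, lam < a i)
    (f g : EuclideanSpace ℝ (Fin (n + 1)) →ₗ[ℝ] EuclideanSpace ℝ (Fin (n + 1)))
    (hf0 : ∀ x : EuclideanSpace ℝ (Fin (n + 1)), f x 0 = Real.sqrt ((b + lam) / b) * x 0)
    (hfi : ∀ (x : EuclideanSpace ℝ (Fin (n + 1))) (i : Fin n),
      f x i.succ = Real.sqrt ((a i - lam) / a i) * x i.succ)
    (hg0 : ∀ y : EuclideanSpace ℝ (Fin (n + 1)), g y 0 = (Real.sqrt ((b + lam) / b))⁻¹ * y 0)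
    (hgi : ∀ (y : EuclideanSpace ℝ (Fin (n + 1))) (i : Fin n),
      g y i.succ = (Real.sqrt ((a i - lam) / a i))⁻¹ * y i.succ)
    (x y : EuclideanSpace ℝ (Fin (n + 1))) (hx : ‖x‖ = 1) (hy : ‖y‖ = 1)
    (hqx : ∑ i : Fin n, (x i.succ) ^ 2 / a i - (x 0) ^ 2 / b = 0)
    (hqy : ∑ i : Fin n, (y i.succ) ^ 2 / (a i - lam) - (y 0) ^ 2 / (b + lam) = 0) :
    ‖f x‖ = 1 ∧ ‖g y‖ = 1 ∧ Real.arccos ⟪x, y⟫ = Real.arccos ⟪f x, g y⟫ := by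
  have hbl : 0 < b + lam := by linarith
  have hal : ∀ i, 0 < a i - lam := fun i => sub_pos.2 (hlam₂ i)
  have hf : ∀ x i, f x i = √(confocalRatio a b lam 0 i) * x i := fun x i => by
    cases i using Fin.cases <;> simp [confocalRatio, hf0, hfi]
  have hg : ∀ y i, g y i = (√(confocalRatio a b lam 0 i))⁻¹ * y i := fun y i => by
    cases i using Fin.cases <;> simp [confocalRatio, hg0, hgi]
  have hg' : ∀ y i, g y i = √(confocalRatio a b 0 lam i) * y i := fun y i => by
    rw [hg, ← Real.sqrt_inv, confocalRatio_inv]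
  have hratio_pos : ∀ i, 0 < confocalRatio a b lam 0 i := fun i => by
    cases i using Fin.cases with
    | zero => simpa [confocalRatio] using div_pos hbl hb
    | succ i => simpa [confocalRatio] using div_pos (hal i) (ha i)
  refine ⟨norm_eq_one_of_confocalQuadric_eq_zero hbl.le (by simpa using hb) (fun i => (hal i).le)
      (by simpa using ha) (hf x) hx (by simpa [confocalQuadric] using hqx),
    norm_eq_one_of_confocalQuadric_eq_zero (by simpa using hb.le) hbl (fun i => by simpa using (ha i).le) hal
      (hg' y) hy hqy, ?_⟩
  rw [EuclideanSpace.inner_eq_of_apply_eq_mul_of_apply_eq_inv_mul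
    (fun i => (Real.sqrt_pos.2 (hratio_pos i)).ne') (hf x) (hg y)]

/-- **Spherical Ivory Lemma**: for `x` on the spherical ellipsoid `E` and `y` on the confocal
spherical ellipsoid `E_λ`, the spherical distance `arccos ⟪x, y⟫` equals the spherical
distance between the corresponding points `f_λ x ∈ E_λ` and `f_λ⁻¹ y ∈ E`. -/
theorem ivory_lemma_sphere (n : ℕ) (hn : 1 ≤ n) (a : Fin n → ℝ) (b : ℝ)
    (ha : ∀ i, 0 < a i) (hb : 0 < b)
    (lam : ℝ) (hlam₁ : -b < lam) (hlam₂ : ∀ i, lam < a i)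
    (f g : EuclideanSpace ℝ (Fin (n + 1)) →ₗ[ℝ] EuclideanSpace ℝ (Fin (n + 1)))
    (hf0 : ∀ x : EuclideanSpace ℝ (Fin (n + 1)), f x 0 = Real.sqrt ((b + lam) / b) * x 0)
    (hfi : ∀ (x : EuclideanSpace ℝ (Fin (n + 1))) (i : Fin n),
      f x i.succ = Real.sqrt ((a i - lam) / a i) * x i.succ)
    (hg0 : ∀ y : EuclideanSpace ℝ (Fin (n + 1)), g y 0 = (Real.sqrt ((b + lam) / b))⁻¹ * y 0)
    (hgi : ∀ (y : EuclideanSpace ℝ (Fin (n + 1))) (i : Fin n),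
      g y i.succ = (Real.sqrt ((a i - lam) / a i))⁻¹ * y i.succ)
    (x y : EuclideanSpace ℝ (Fin (n + 1))) (hx : ‖x‖ = 1) (hy : ‖y‖ = 1)
    (hqx : ∑ i : Fin n, (x i.succ) ^ 2 / a i - (x 0) ^ 2 / b = 0)
    (hqy : ∑ i : Fin n, (y i.succ) ^ 2 / (a i - lam) - (y 0) ^ 2 / (b + lam) = 0) :
    ‖f x‖ = 1 ∧ ‖g y‖ = 1 ∧ Real.arccos ⟪x, y⟫ = Real.arccos ⟪f x, g y⟫ :=
  ivory_lemma_sphere_general n a b ha hb lam hlam₁ hlam₂ f g hf0 hfi hg0 hgi x y hx hy hqx hqy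
end

section
/- Let d ≥ 1 be an odd integer and let P : ℝ[X] satisfy: natDegree P = 2d, P.coeff k = 0 for every odd k, P.coeff 0 ≠ 0, Multiset.card P.roots = 2d, and exactly d roots of P (with multiplicity) lie in (0, ∞). Let ε ∈ ℝ and set Q₊ = P - ε • X^d and Q₋ = P + ε • X^d; assume Multiset.card (Q₊.roots) = 2d = Multiset.card (Q₋.roots) and that each of Q₊, Q₋ has exactly d roots (with multiplicity) in (0, ∞). Then (∏ roots of P in (0, ∞))² = (∏ roots of Q₊ in (0, ∞)) * (∏ roots of Q₋ in (0, ∞)). (This is the odd-degree case of the key lemma for Arnold's theorem: ∑ (t_i - (t_i^{-ε} + t_i^{ε})/2) = 0 in logarithmic coordinates.) -/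
open Polynomial

/-! As `P` is even and `d` is odd, `Q₋(x) = Q₊(-x)` and `P(x) = P(-x)`; none of them vanishes
at `0`, so the negative roots of `P` (resp. `Q₊`) are the negatives of the positive roots of `P`
(resp. `Q₋`), and there are `d` of them. Vieta's formula for the constant term of a split
polynomial of even degree then gives `P(0) = -lc(P) (∏₊ P)²` and `Q₊(0) = -lc(Q₊) ∏₊ Q₊ ∏₊ Q₋`,
while `Q₊(0) = P(0)` and `lc(Q₊) = lc(P)`. -/

namespace Multiset

variable {R : Type*} [CommRing R] [LinearOrder R] [IsStrictOrderedRing R]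

theorem prod_filter_neg_eq_neg_one_pow_mul (s : Multiset R) :
    (s.filter (· < 0)).prod =
      (-1) ^ card ((s.map Neg.neg).filter (0 < ·)) * ((s.map Neg.neg).filter (0 < ·)).prod := by
  have hneg : (s.map Neg.neg).filter (0 < ·) = (s.filter (· < 0)).map Neg.neg := by
    simp only [filter_map, Function.comp_def, neg_pos]
  rw [hneg, card_map, prod_map_neg, ← mul_assoc, ← pow_add, ← two_mul, pow_mul, neg_one_sq,
    one_pow, one_mul]

theorem prod_eq_neg_one_pow_mul_prod_filter_pos_mul {s : Multiset R} (hs : (0 : R) ∉ s) :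
    s.prod = (-1) ^ card ((s.map Neg.neg).filter (0 < ·)) *
      (s.filter (0 < ·)).prod * ((s.map Neg.neg).filter (0 < ·)).prod := by
  have hnonpos : s.filter (fun x => ¬ 0 < x) = s.filter (· < 0) :=
    filter_congr fun x hx => by
      rw [not_lt, le_iff_lt_or_eq, or_iff_left (ne_of_mem_of_not_mem hx hs)]
  rw [← prod_filter_mul_prod_filter_not (0 < ·) (s := s), hnonpos,
    prod_filter_neg_eq_neg_one_pow_mul]
  ring

end Multiset

namespace Polynomial

variable {R : Type*} [CommRing R]

theorem comp_neg_X_eq_self_of_coeff_odd {p : R[X]} (h : ∀ k, Odd k → p.coeff k = 0) :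
    p.comp (-X) = p := by
  rw [comp_eq_sum_left]
  conv_rhs => rw [← sum_C_mul_X_pow_eq p]
  refine Finset.sum_congr rfl fun k hk => ?_
  have hk : Even k := Nat.not_odd_iff_even.1 fun hodd => mem_support_iff.1 hk (h k hodd)
  simp only [hk.neg_pow]

variable [LinearOrder R] [IsStrictOrderedRing R]

theorem prod_roots_eq_of_comp_neg_X {p q : R[X]} (h0 : p.coeff 0 ≠ 0) (hq : p.comp (-X) = q) :
    p.roots.prod = (-1) ^ Multiset.card (q.roots.filter (0 < ·)) *
      (p.roots.filter (0 < ·)).prod * (q.roots.filter (0 < ·)).prod := by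
  have hp : p ≠ 0 := by rintro rfl; exact h0 (coeff_zero 0)
  have h0roots : (0 : R) ∉ p.roots := by
    rwa [mem_roots hp, IsRoot, ← coeff_zero_eq_eval_zero]
  rw [← hq, roots_comp_neg_X]
  exact Multiset.prod_eq_neg_one_pow_mul_prod_filter_pos_mul h0roots

theorem coeff_zero_eq_of_comp_neg_X {p q : R[X]} (hsplit : Multiset.card p.roots = p.natDegree)
    (hdeg : Even p.natDegree) (h0 : p.coeff 0 ≠ 0) (hq : p.comp (-X) = q) :
    p.coeff 0 = (-1) ^ Multiset.card (q.roots.filter (0 < ·)) * p.leadingCoeff *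
      (p.roots.filter (0 < ·)).prod * (q.roots.filter (0 < ·)).prod := by
  rw [(splits_iff_card_roots.2 hsplit).coeff_zero_eq_leadingCoeff_mul_prod_roots, hdeg.neg_one_pow,
    prod_roots_eq_of_comp_neg_X h0 hq]
  ring

end Polynomial

theorem prod_pos_roots_eq_odd_case_general (d : ℕ) (hdodd : Odd d) (P : ℝ[X])
    (hdeg : P.natDegree = 2 * d) (hodd : ∀ k, Odd k → P.coeff k = 0)
    (h0 : P.coeff 0 ≠ 0) (hroots : Multiset.card P.roots = 2 * d)
    (hpos : Multiset.card (P.roots.filter fun x => 0 < x) = d)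
    (ε : ℝ)
    (hrootsQp : Multiset.card (P - ε • X ^ d).roots = 2 * d)
    (hposQm : Multiset.card ((P + ε • X ^ d).roots.filter fun x => 0 < x) = d) :
    ((P.roots.filter fun x => 0 < x).prod) ^ 2 =
      ((P - ε • X ^ d).roots.filter fun x => 0 < x).prod *
        ((P + ε • X ^ d).roots.filter fun x => 0 < x).prod := by
  have hd : d ≠ 0 := hdodd.pos.ne'
  have hsmall : (ε • X ^ d : ℝ[X]).natDegree < P.natDegree :=
    (natDegree_smul_le _ _).trans_lt (by rw [natDegree_X_pow, hdeg]; omega)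
  have hdegQ : (P - ε • X ^ d).natDegree = 2 * d := by
    rw [natDegree_sub_eq_left_of_natDegree_lt hsmall, hdeg]
  have hleadQ : (P - ε • X ^ d).leadingCoeff = P.leadingCoeff :=
    leadingCoeff_sub_of_degree_lt (degree_lt_degree hsmall)
  have h0Q : (P - ε • X ^ d).coeff 0 = P.coeff 0 := by
    simp [coeff_X_pow, hd.symm]
  have hsymm : P.comp (-X) = P := comp_neg_X_eq_self_of_coeff_odd hodd
  have hsymmQ : (P - ε • X ^ d).comp (-X) = P + ε • X ^ d := by
    rw [sub_comp, smul_comp, pow_comp, X_comp, hsymm, hdodd.neg_pow, smul_neg, sub_neg_eq_add]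
  have hvietaP := coeff_zero_eq_of_comp_neg_X (hroots.trans hdeg.symm) (hdeg ▸ even_two_mul d) h0
    hsymm
  have hvietaQ := coeff_zero_eq_of_comp_neg_X (hrootsQp.trans hdegQ.symm)
    (hdegQ ▸ even_two_mul d) (h0Q ▸ h0) hsymmQ
  rw [hpos, hdodd.neg_one_pow] at hvietaP
  rw [hposQm, hdodd.neg_one_pow, hleadQ, h0Q, hvietaP] at hvietaQ
  have hlead : -1 * P.leadingCoeff ≠ 0 := by
    rw [neg_one_mul, neg_ne_zero, leadingCoeff_ne_zero]
    rintro rfl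
    exact h0 (coeff_zero 0)
  exact mul_left_cancel₀ hlead (by linear_combination hvietaQ)

/-- **Odd-degree case of the key lemma for Arnold's theorem**: let `P` be a real polynomial
of degree `2d` (`d` odd) with only even-degree monomials, nonzero constant term, all roots
real, and exactly `d` positive roots; if `Q₊ = P - ε X^d` and `Q₋ = P + ε X^d` have all roots
real with exactly `d` positive ones each, then the square of the product of the positive
roots of `P` equals the product of the positive roots of `Q₊` times that of `Q₋`. -/
theorem prod_pos_roots_eq_odd_case (d : ℕ) (hd : 1 ≤ d) (hdodd : Odd d) (P : ℝ[X])
    (hdeg : P.natDegree = 2 * d) (hodd : ∀ k, Odd k → P.coeff k = 0)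
    (h0 : P.coeff 0 ≠ 0) (hroots : Multiset.card P.roots = 2 * d)
    (hpos : Multiset.card (P.roots.filter fun x => 0 < x) = d)
    (ε : ℝ)
    (hrootsQp : Multiset.card (P - ε • X ^ d).roots = 2 * d)
    (hrootsQm : Multiset.card (P + ε • X ^ d).roots = 2 * d)
    (hposQp : Multiset.card ((P - ε • X ^ d).roots.filter fun x => 0 < x) = d)
    (hposQm : Multiset.card ((P + ε • X ^ d).roots.filter fun x => 0 < x) = d) :
    ((P.roots.filter fun x => 0 < x).prod) ^ 2 =
      ((P - ε • X ^ d).roots.filter fun x => 0 < x).prod *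
        ((P + ε • X ^ d).roots.filter fun x => 0 < x).prod :=
  prod_pos_roots_eq_odd_case_general d hdodd P hdeg hodd h0 hroots hpos ε hrootsQp hposQm
end
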